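/- arXiv:1906.01993 — 4 statements merged into one kernel-verified Lean document; each statement's English description precedes it below -/
import Mathlib

section
/- If a matching M is produced by the greedy algorithm that iterates over edges of a weighted graph in non-increasing order of weight and adds an edge whenever both endpoints are unmatched, then the weight of M is at least half the weight of a maximum weight matching. -/
/-!
Charge every edge `e` of `Mstar` to an edge of `M` that shares a vertex with `e` and weighs at
least as much: one exists by greediness. Since the edges of `Mstar` are vertex-disjoint, an edge
`s(x, y)` of `M` is charged at most twice, once through `x` and once through `y`.
-/

/-- Two edges (as unordered pairs) are adjacent: they share an endpoint. -/
def EdgeAdj {V : Type*} (e e' : Sym2 V) : Prop := ∃ v : V, v ∈ e ∧ v ∈ e'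

/-- `M` is a matching in the graph `G`: its members are edges of `G` that are
pairwise vertex-disjoint. -/
def IsMatchingIn {V : Type*} (G : SimpleGraph V) (M : Finset (Sym2 V)) : Prop :=
  (∀ e ∈ M, e ∈ G.edgeSet) ∧
  (∀ e ∈ M, ∀ e' ∈ M, e ≠ e' → ∀ v : V, v ∈ e → v ∉ e')

open Finset

theorem Finset.sum_le_nsmul_sum_of_card_fiber_le {α β R : Type*} [DecidableEq β]
    [AddCommMonoid R] [PartialOrder R] [IsOrderedAddMonoid R]
    {s : Finset α} {t : Finset β} {f : α → β} (hf : ∀ a ∈ s, f a ∈ t)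
    {u : α → R} {v : β → R} (huv : ∀ a ∈ s, u a ≤ v (f a)) (hv : ∀ b ∈ t, 0 ≤ v b)
    {n : ℕ} (hn : ∀ b ∈ t, #{a ∈ s | f a = b} ≤ n) :
    ∑ a ∈ s, u a ≤ n • ∑ b ∈ t, v b :=
  calc ∑ a ∈ s, u a
      ≤ ∑ a ∈ s, v (f a) := sum_le_sum huv
    _ = ∑ b ∈ t, #{a ∈ s | f a = b} • v b := by
      rw [← sum_fiberwise_of_maps_to hf]
      refine sum_congr rfl fun b _ => ?_
      rw [← sum_const]
      exact sum_congr rfl fun a ha => by rw [(mem_filter.1 ha).2]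
    _ ≤ ∑ b ∈ t, n • v b := sum_le_sum fun b hb => nsmul_le_nsmul_left (hv b hb) (hn b hb)
    _ = n • ∑ b ∈ t, v b := (smul_sum ..).symm

theorem edgeAdj_refl {V : Type*} (e : Sym2 V) : EdgeAdj e e :=
  ⟨_, Sym2.out_fst_mem e, Sym2.out_fst_mem e⟩

section VertexDisjoint

variable {V : Type*} [DecidableEq V] {s : Finset (Sym2 V)}

theorem card_filter_mem_le_one (hs : ∀ e ∈ s, ∀ e' ∈ s, e ≠ e' → ∀ v : V, v ∈ e → v ∉ e')
    (v : V) : #{e ∈ s | v ∈ e} ≤ 1 :=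
  card_le_one.2 fun e he e' he' => by
    rw [mem_filter] at he he'
    by_contra hne
    exact hs e he.1 e' he'.1 hne v he.2 he'.2

theorem card_le_two_of_forall_edgeAdj
    (hs : ∀ e ∈ s, ∀ e' ∈ s, e ≠ e' → ∀ v : V, v ∈ e → v ∉ e') {t : Finset (Sym2 V)}
    (hts : t ⊆ s) {b : Sym2 V} (ht : ∀ e ∈ t, EdgeAdj e b) : #t ≤ 2 := by
  induction b using Sym2.ind with
  | _ x y =>
    have hsub : t ⊆ {e ∈ s | x ∈ e} ∪ {e ∈ s | y ∈ e} := by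
      intro e he
      obtain ⟨v, hve, hvb⟩ := ht e he
      rcases Sym2.mem_iff.1 hvb with rfl | rfl <;> simp [hts he, hve]
    have hx := card_filter_mem_le_one hs x
    have hy := card_filter_mem_le_one hs y
    have := (card_le_card hsub).trans (card_union_le _ _)
    omega

end VertexDisjoint

theorem greedy_matching_two_approx_general {V : Type*}
    (G : SimpleGraph V) (w : Sym2 V → ℝ) (hw : ∀ e, 0 ≤ w e)
    (M Mstar : Finset (Sym2 V))
    (hMstar : IsMatchingIn G Mstar)
    (hgreedy : ∀ e ∈ G.edgeSet, e ∈ M ∨ ∃ e' ∈ M, EdgeAdj e e' ∧ w e ≤ w e') :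
    (∑ e ∈ Mstar, w e) / 2 ≤ ∑ e ∈ M, w e := by
  classical
  have hcharge : ∀ e ∈ Mstar, ∃ e' ∈ M, EdgeAdj e e' ∧ w e ≤ w e' := fun e he =>
    (hgreedy e (hMstar.1 e he)).elim (fun heM => ⟨e, heM, edgeAdj_refl e, le_rfl⟩) id
  choose! f hfM hadj hwf using hcharge
  have hfiber : ∀ b ∈ M, #{e ∈ Mstar | f e = b} ≤ 2 := fun b _ =>
    card_le_two_of_forall_edgeAdj hMstar.2 (filter_subset _ _) fun e he =>
      (mem_filter.1 he).2 ▸ hadj e (mem_filter.1 he).1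
  have hsum := sum_le_nsmul_sum_of_card_fiber_le hfM hwf (fun b _ => hw b) hfiber
  rw [two_nsmul] at hsum
  linarith

/-- a greedy matching (every edge of the graph is either in `M` or blocked
by an `M`-edge of at least its weight) has weight at least half that of any
(in particular a maximum weight) matching. -/
theorem greedy_matching_two_approx {V : Type*} [Fintype V] [DecidableEq V]
    (G : SimpleGraph V) (w : Sym2 V → ℝ) (hw : ∀ e, 0 ≤ w e)
    (M Mstar : Finset (Sym2 V))
    (hM : IsMatchingIn G M) (hMstar : IsMatchingIn G Mstar)
    (hgreedy : ∀ e ∈ G.edgeSet, e ∈ M ∨ ∃ e' ∈ M, EdgeAdj e e' ∧ w e ≤ w e') :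
    (∑ e ∈ Mstar, w e) / 2 ≤ ∑ e ∈ M, w e :=
  greedy_matching_two_approx_general G w hw M Mstar hMstar hgreedy
end

section
/- The optimal value of the linear program: minimize Z subject to α₀ + α₂ + α₃ + β₁ + β₂ + β₃ = 1, Z ≥ β₁/2 + β₂ + β₃, Z ≥ (α₀ + β₁/2 + α₂ + α₃)/2, Z ≥ (α₀ + β₁/2 + α₂ + β₃)/2, α₂ ≥ β₂, α₃ ≥ β₃/2, and all variables in [0,1], equals 1/3. -/
/-- Feasibility for the factor-revealing LP. -/
def LPFeasible (Z a0 a2 a3 b1 b2 b3 : ℝ) : Prop :=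
  a0 + a2 + a3 + b1 + b2 + b3 = 1 ∧
  b1 / 2 + b2 + b3 ≤ Z ∧
  (a0 + b1 / 2 + a2 + a3) / 2 ≤ Z ∧
  (a0 + b1 / 2 + a2 + b3) / 2 ≤ Z ∧
  b2 ≤ a2 ∧
  b3 / 2 ≤ a3 ∧
  a0 ∈ Set.Icc (0:ℝ) 1 ∧ a2 ∈ Set.Icc (0:ℝ) 1 ∧ a3 ∈ Set.Icc (0:ℝ) 1 ∧
  b1 ∈ Set.Icc (0:ℝ) 1 ∧ b2 ∈ Set.Icc (0:ℝ) 1 ∧ b3 ∈ Set.Icc (0:ℝ) 1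

/-- the optimal value of the factor-revealing LP equals `1/3`. -/
theorem factor_revealing_LP_value :
    (∀ Z a0 a2 a3 b1 b2 b3 : ℝ, LPFeasible Z a0 a2 a3 b1 b2 b3 → (1:ℝ)/3 ≤ Z) ∧
    (∃ Z a0 a2 a3 b1 b2 b3 : ℝ, LPFeasible Z a0 a2 a3 b1 b2 b3 ∧ Z = 1/3) := by
  constructor
  · rintro Z a0 a2 a3 b1 b2 b3 ⟨h1, h2, h3, h4, h5, h6, _⟩
    linarith
  · refine ⟨1/3, 0, 0, 1/3, 2/3, 0, 0, ?_, rfl⟩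
    refine ⟨by norm_num, by norm_num, by norm_num, by norm_num, le_refl _, by norm_num, ?_, ?_, ?_, ?_, ?_, ?_⟩ <;>
      constructor <;> norm_num
end

section
/- For every assignment of reals α₀, α₂, α₃, β₁, β₂, β₃ ∈ [0,1] with α₀ + α₂ + α₃ + β₁ + β₂ + β₃ = 1, α₂ ≥ β₂ and α₃ ≥ β₃/2, we have max(β₁/2 + β₂ + β₃, (α₀ + β₁/2 + α₂ + α₃)/2, (α₀ + β₁/2 + α₂ + β₃)/2) ≥ 1/3. -/
/-- lower-bound direction of the factor-revealing LP. -/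
theorem factor_revealing_LP_lower_bound
    (a0 a2 a3 b1 b2 b3 : ℝ)
    (ha0 : a0 ∈ Set.Icc (0:ℝ) 1) (ha2 : a2 ∈ Set.Icc (0:ℝ) 1) (ha3 : a3 ∈ Set.Icc (0:ℝ) 1)
    (hb1 : b1 ∈ Set.Icc (0:ℝ) 1) (hb2 : b2 ∈ Set.Icc (0:ℝ) 1) (hb3 : b3 ∈ Set.Icc (0:ℝ) 1)
    (hsum : a0 + a2 + a3 + b1 + b2 + b3 = 1)
    (h2 : b2 ≤ a2) (h3 : b3 / 2 ≤ a3) :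
    (1:ℝ)/3 ≤ max (b1 / 2 + b2 + b3)
      (max ((a0 + b1 / 2 + a2 + a3) / 2) ((a0 + b1 / 2 + a2 + b3) / 2)) := by
  by_contra h
  push_neg at h
  simp only [lt_max_iff, not_or, not_lt, max_lt_iff] at h
  linarith [h.1, h.2.1]
end

section
/- In the lower-bound construction, if the union C of all coresets satisfies E[|C ∩ M_{ĀB̄}|] ≤ n/(4α) and every matching in C has size at most |C ∩ M_{ĀB̄}| + 2·n_{AB} with 2·n_{AB} ≤ n/(4α), then the expected maximum matching size in C is less than n/(2α), while the graph has a matching of size at least n/2; hence C is not an α-approximate coreset. -/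
open MeasureTheory

theorem integral_le_integral_add_const_of_ae_le {Ω : Type*} [MeasurableSpace Ω]
    {μ : Measure Ω} [IsProbabilityMeasure μ] {X Y : Ω → ℝ} {c : ℝ}
    (hX : Integrable X μ) (hY : Integrable Y μ) (hle : Y ≤ᵐ[μ] fun ω => X ω + c) :
    ∫ ω, Y ω ∂μ ≤ (∫ ω, X ω ∂μ) + c :=
  calc ∫ ω, Y ω ∂μ ≤ ∫ ω, X ω + c ∂μ := integral_mono_ae hY (hX.add (integrable_const c)) hle
    _ = (∫ ω, X ω ∂μ) + c := by
      rw [integral_add hX (integrable_const c), integral_const, probReal_univ, one_smul]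

theorem coreset_lower_bound_contradiction_general
    {Ω : Type*} [MeasurableSpace Ω] (μ : Measure Ω) [IsProbabilityMeasure μ]
    (X Y : Ω → ℝ) (α n nAB optG : ℝ)
    (hα : 1 ≤ α)
    (hX : Integrable X μ) (hY : Integrable Y μ)
    (hEX : ∫ ω, X ω ∂μ ≤ n / (4 * α))
    (hpt : ∀ ω, Y ω ≤ X ω + 2 * nAB)
    (hsmall : 2 * nAB < n / (4 * α))
    (hoptG : n / 2 ≤ optG) :
    (∫ ω, Y ω ∂μ) < n / (2 * α) ∧ ¬ (optG ≤ α * ∫ ω, Y ω ∂μ) := by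
  have hα0 : 0 < α := by linarith
  have hEY : ∫ ω, Y ω ∂μ < n / (2 * α) :=
    calc ∫ ω, Y ω ∂μ ≤ (∫ ω, X ω ∂μ) + 2 * nAB :=
          integral_le_integral_add_const_of_ae_le hX hY (ae_of_all μ hpt)
      _ < n / (4 * α) + n / (4 * α) := add_lt_add_of_le_of_lt hEX hsmall
      _ = n / (2 * α) := by ring
  refine ⟨hEY, fun happrox => ?_⟩
  have hαEY : α * ∫ ω, Y ω ∂μ < n / 2 :=
    calc α * ∫ ω, Y ω ∂μ < α * (n / (2 * α)) := mul_lt_mul_of_pos_left hEY hα0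
      _ = n / 2 := by field_simp
  linarith

/-- in the lower-bound construction, if `E[|C ∩ M_{ĀB̄}|] ≤ n/(4α)` (random
variable `X`), every matching in `C` has size at most `|C ∩ M_{ĀB̄}| + 2·n_AB` (random
variable `Y` for the maximum matching size in `C`) with `2·n_AB < n/(4α)`, and the graph
has a matching of size at least `n/2` (`optG ≥ n/2`), then `E[Y] < n/(2α)` and in
particular `C` is not an `α`-approximate coreset, i.e. `¬(α·E[Y] ≥ optG)`. -/
theorem coreset_lower_bound_contradiction
    {Ω : Type*} [MeasurableSpace Ω] (μ : Measure Ω) [IsProbabilityMeasure μ]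
    (X Y : Ω → ℝ) (α n nAB optG : ℝ)
    (hα : 1 ≤ α) (hn : 0 < n) (hnAB : 0 ≤ nAB)
    (hX : Integrable X μ) (hY : Integrable Y μ)
    (hEX : ∫ ω, X ω ∂μ ≤ n / (4 * α))
    (hpt : ∀ ω, Y ω ≤ X ω + 2 * nAB)
    (hsmall : 2 * nAB < n / (4 * α))
    (hoptG : n / 2 ≤ optG) :
    (∫ ω, Y ω ∂μ) < n / (2 * α) ∧ ¬ (optG ≤ α * ∫ ω, Y ω ∂μ) :=
  coreset_lower_bound_contradiction_general μ X Y α n nAB optG hα hX hY hEX hpt hsmall hoptG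
end
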